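/- arXiv:2005.08570 — 4 statements merged into one kernel-verified Lean document; each statement's English description precedes it below -/
import Mathlib

section
/- Let h be a local mapping from a CA α to a finite set S whose associated family Φ_h is deterministic, so that it defines a CA β = Γ_{Φ_h}. Then for all c ∈ I_α, t ∈ ℕ, p ∈ ℤ: the space-time diagram of β from h_z(c) satisfies D_β(h_z∘c)(t+1, p) = h_s(D_α(c)(t, p−1), D_α(c)(t, p), D_α(c)(t, p+1)). That is, h(D_α(c)) = D_β(h_z∘c). -/
namespace FSSP

open Classical

/-- A (pre-)cellular automaton: a set of initial configurations and a
partial local transition function (partiality via `Option`). -/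
structure PreCA (σ : Type) where
  init : Set (ℤ → σ)
  delta : σ → σ → σ → Option σ

variable {σ τ υ : Type}

/-- The (partial) space-time diagram of a configuration. -/
def PreCA.diagO (A : PreCA σ) (c : ℤ → σ) : ℕ → ℤ → Option σ
  | 0, p => some (c p)
  | t+1, p =>
    (A.diagO c t (p-1)).bind fun a =>
    (A.diagO c t p).bind fun b =>
    (A.diagO c t (p+1)).bind fun d =>
    A.delta a b d

/-- The CA condition: all space-time diagrams of initial configurations are
totally defined. -/
def PreCA.Total (A : PreCA σ) : Prop :=
  ∀ c ∈ A.init, ∀ (t : ℕ) (p : ℤ), (A.diagO c t p).isSome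

/-- The family of space-time diagrams associated to a CA. -/
def PreCA.family (A : PreCA σ) : Set (ℕ → ℤ → σ) :=
  { d | ∃ c ∈ A.init, ∀ (t : ℕ) (p : ℤ), A.diagO c t p = some (d t p) }

/-- The local configuration (a,b,c) occurs somewhere in the diagrams of `A`. -/
def PreCA.Occurs (A : PreCA σ) (a b c : σ) : Prop :=
  ∃ c0 ∈ A.init, ∃ (t : ℕ) (p : ℤ),
    A.diagO c0 t (p-1) = some a ∧ A.diagO c0 t p = some b ∧ A.diagO c0 t (p+1) = some c

/-- The set of states occurring in the space-time diagrams of `A`. -/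
def OccStates (A : PreCA σ) : Set σ :=
  { s | ∃ c ∈ A.init, ∃ (t : ℕ) (p : ℤ), A.diagO c t p = some s }

/-- The local transition relation of a family of space-time diagrams. -/
def ltr (D : Set (ℕ → ℤ → σ)) (l : σ × σ × σ) (s : σ) : Prop :=
  ∃ d ∈ D, ∃ (t : ℕ) (p : ℤ),
    d t (p-1) = l.1 ∧ d t p = l.2.1 ∧ d t (p+1) = l.2.2 ∧ d (t+1) p = s

/-- A family of diagrams is deterministic when its local transition relation
is functional. -/
def Deterministic (D : Set (ℕ → ℤ → σ)) : Prop :=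
  ∀ l s s', ltr D l s → ltr D l s' → s = s'

/-- The cellular automaton `Γ_D` associated to a family of diagrams `D`. -/
noncomputable def gamma (D : Set (ℕ → ℤ → σ)) : PreCA σ where
  init := { c | ∃ d ∈ D, c = fun p => d 0 p }
  delta := fun a b c =>
    if h : ∃ s, ltr D (a, b, c) s then some h.choose else none

/-- A local mapping from a CA with states `σ` to a set `τ`. -/
structure LocalMapping (σ τ : Type) where
  z : σ → τ
  s : σ × σ × σ → τ

/-- The transformed space-time diagram `h(d)`. -/
def LocalMapping.map (h : LocalMapping σ τ) (d : ℕ → ℤ → σ) : ℕ → ℤ → τ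
  | 0, p => h.z (d 0 p)
  | t+1, p => h.s (d t (p-1), d t p, d t (p+1))

/-- The family `Φ_h` of diagrams associated to a local mapping `h` from `A`. -/
def Phi (A : PreCA σ) (h : LocalMapping σ τ) : Set (ℕ → ℤ → τ) :=
  { e | ∃ d ∈ A.family, e = h.map d }

/-- Equational characterization: `h` is a local simulation from `A` to `B`. -/
def IsLocalSimulation (A : PreCA σ) (B : PreCA τ) (h : LocalMapping σ τ) : Prop :=
  B.init = { c' | ∃ c ∈ A.init, c' = fun p => h.z (c p) } ∧
  ∀ c ∈ A.init, ∀ (t : ℕ) (p : ℤ) (a b d : σ),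
    A.diagO c t (p-1) = some a → A.diagO c t p = some b → A.diagO c t (p+1) = some d →
    B.diagO (fun q => h.z (c q)) (t+1) p = some (h.s (a, b, d))

/-- The renaming of a CA along a bijection of states. -/
def rename (B : PreCA τ) (r : τ ≃ υ) : PreCA υ where
  init := { c' | ∃ c ∈ B.init, c' = fun p => r (c p) }
  delta := fun a b c => (B.delta (r.symm a) (r.symm b) (r.symm c)).map r

/-- The time-0 part of the super local transition table. -/
def SLTz (A : PreCA σ) : Set (σ × σ × σ) :=
  { l | ∃ d ∈ A.family, ∃ p : ℤ, d 0 (p-1) = l.1 ∧ d 0 p = l.2.1 ∧ d 0 (p+1) = l.2.2 }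

/-- The main part of the super local transition table: a quintuple at time t
together with the triple below it at time t+1. -/
def SLTs (A : PreCA σ) : Set ((σ × σ × σ × σ × σ) × (σ × σ × σ)) :=
  { q | ∃ d ∈ A.family, ∃ (t : ℕ) (p : ℤ),
      d t (p-2) = q.1.1 ∧ d t (p-1) = q.1.2.1 ∧ d t p = q.1.2.2.1 ∧
      d t (p+1) = q.1.2.2.2.1 ∧ d t (p+2) = q.1.2.2.2.2 ∧
      d (t+1) (p-1) = q.2.1 ∧ d (t+1) p = q.2.2.1 ∧ d (t+1) (p+1) = q.2.2.2 }

/-- The four special FSSP states. -/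
structure FSSPStates (σ : Type) where
  star : σ
  G : σ
  Q : σ
  F : σ

/-- The FSSP initial configuration of size `n`. -/
def initConfig (st : FSSPStates σ) (n : ℕ) : ℤ → σ := fun p =>
  if p ≤ 0 then st.star
  else if p = 1 then st.G
  else if p ≤ (n : ℤ) then st.Q
  else st.star

/-- `A` is an FSSP-candidate CA with special states `st`. -/
def IsCandidate (A : PreCA σ) (st : FSSPStates σ) : Prop :=
  A.init = { c | ∃ n : ℕ, 2 ≤ n ∧ c = initConfig st n } ∧
  (∀ a b c s, A.delta a b c = some s → (s = st.star ↔ b = st.star)) ∧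
  A.delta st.Q st.Q st.Q = some st.Q ∧
  A.delta st.Q st.Q st.star = some st.Q

/-- `A` is a minimal-time FSSP solution. -/
def IsSolution (A : PreCA σ) (st : FSSPStates σ) : Prop :=
  IsCandidate A st ∧ A.Total ∧
  ∀ n : ℕ, 2 ≤ n → ∀ (t : ℕ) (p : ℤ),
    (A.diagO (initConfig st n) t p = some st.F ↔ (2*n - 2 ≤ t ∧ 1 ≤ p ∧ p ≤ (n : ℤ)))

/-- FSSP-compliance of a local mapping `h` from `A` (with states `sa`) to the
states of an FSSP-candidate with special states `sb`. -/
def FSSPCompliant (A : PreCA σ) (sa : FSSPStates σ) (sb : FSSPStates τ)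
    (h : LocalMapping σ τ) : Prop :=
  h.z sa.star = sb.star ∧ h.z sa.G = sb.G ∧ h.z sa.Q = sb.Q ∧
  (∀ a b c, (A.delta a b c).isSome → (h.s (a, b, c) = sb.star ↔ b = sa.star)) ∧
  (∀ a b c, (A.delta a b c).isSome → (h.s (a, b, c) = sb.F ↔ A.delta a b c = some sa.F)) ∧
  h.s (sa.Q, sa.Q, sa.Q) = sb.Q ∧ h.s (sa.Q, sa.Q, sa.star) = sb.Q


/-- if `Φ_h` is deterministic then for `β = Γ_{Φ_h}`,
`D_β(h_z∘c)(t+1,p) = h_s(D_α(c)(t,p-1), D_α(c)(t,p), D_α(c)(t,p+1))`. -/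
theorem stmt3 {σ τ : Type} (A : PreCA σ) (hA : A.Total) (h : LocalMapping σ τ)
    (hdet : Deterministic (Phi A h)) :
    ∀ c ∈ A.init, ∀ (t : ℕ) (p : ℤ) (a b d : σ),
      A.diagO c t (p-1) = some a → A.diagO c t p = some b →
      A.diagO c t (p+1) = some d →
      (gamma (Phi A h)).diagO (fun q => h.z (c q)) (t+1) p
        = some (h.s (a, b, d)) := by
  intro c hc t p a b d ha hb hd
  -- the total diagram of c
  set D : ℕ → ℤ → σ := fun t p => (A.diagO c t p).get (hA c hc t p) with hD
  have hDeq : ∀ (t : ℕ) (p : ℤ), A.diagO c t p = some (D t p) := by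
    intro t p; simp [hD]
  have hfam : D ∈ A.family := ⟨c, hc, hDeq⟩
  have hPhi : h.map D ∈ Phi A h := ⟨D, hfam, rfl⟩
  set e := h.map D with he
  -- key claim: β's diagram from h_z∘c is e
  have key : ∀ (t : ℕ) (p : ℤ),
      (gamma (Phi A h)).diagO (fun q => h.z (c q)) t p = some (e t p) := by
    intro t
    induction t with
    | zero =>
      intro p
      have hD0 : D 0 p = c p := by
        have := hDeq 0 p
        simp [PreCA.diagO] at this
        exact this.symm
      simp [PreCA.diagO, he, LocalMapping.map, hD0]
    | succ t ih =>
      intro p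
      have hltr : ltr (Phi A h) (e t (p-1), e t p, e t (p+1)) (e (t+1) p) :=
        ⟨e, hPhi, t, p, rfl, rfl, rfl, rfl⟩
      have hex : ∃ s, ltr (Phi A h) (e t (p-1), e t p, e t (p+1)) s :=
        ⟨_, hltr⟩
      have hch : hex.choose = e (t+1) p :=
        hdet _ _ _ hex.choose_spec hltr
      show ((gamma (Phi A h)).diagO (fun q => h.z (c q)) t (p-1)).bind _ = _
      rw [ih (p-1), ih p, ih (p+1)]
      simp only [Option.bind_some]
      show (gamma (Phi A h)).delta _ _ _ = _
      simp only [gamma, dif_pos hex, hch]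
  -- conclude
  have haD : D t (p-1) = a := by
    have := (hDeq t (p-1)).symm.trans ha; exact Option.some.inj this
  have hbD : D t p = b := Option.some.inj ((hDeq t p).symm.trans hb)
  have hdD : D t (p+1) = d := Option.some.inj ((hDeq t (p+1)).symm.trans hd)
  have : e (t+1) p = h.s (a, b, d) := by
    simp [he, LocalMapping.map, haD, hbD, hdD]
  rw [key (t+1) p, this]

end FSSP
end

section
/- Let α be a CA and Δ_α its super local transition table, where (Δ_α)_z ⊆ Σ_α³ collects all horizontal triples occurring at time 0 in diagrams of α and (Δ_α)_s ⊆ Σ_α⁵ × Σ_α³ collects all pairs (quintuple at time t, triple at time t+1) occurring in diagrams of α. Then for any local mapping h from α to a set S, the local transition relation δ_{Φ_h} of the family Φ_h satisfies: ((l⁰₋₁,l⁰₀,l⁰₁), l¹₀) ∈ δ_{Φ_h} if and only if either there exists (s₋₁,s₀,s₁) ∈ (Δ_α)_z with l⁰ᵢ = h_z(sᵢ) and l¹₀ = h_s(s₋₁,s₀,s₁), or there exists ((s⁰₋₂,…,s⁰₂),(s¹₋₁,s¹₀,s¹₁)) ∈ (Δ_α)_s with lʲᵢ = h_s(sʲᵢ₋₁,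 sʲᵢ, sʲᵢ₊₁). -/
namespace FSSP

open Classical

variable {σ τ υ : Type}

/-- characterization of the local transition relation of `Φ_h`
via the super local transition table of `α`. -/
theorem stmt6 {σ τ : Type} (A : PreCA σ) (h : LocalMapping σ τ)
    (l : τ × τ × τ) (s : τ) :
    ltr (Phi A h) l s ↔
      ((∃ sm s0 sp : σ, (sm, s0, sp) ∈ SLTz A ∧
          l.1 = h.z sm ∧ l.2.1 = h.z s0 ∧ l.2.2 = h.z sp ∧
          s = h.s (sm, s0, sp)) ∨
        (∃ q ∈ SLTs A,
          l.1 = h.s (q.1.1, q.1.2.1, q.1.2.2.1) ∧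
          l.2.1 = h.s (q.1.2.1, q.1.2.2.1, q.1.2.2.2.1) ∧
          l.2.2 = h.s (q.1.2.2.1, q.1.2.2.2.1, q.1.2.2.2.2) ∧
          s = h.s q.2)) := by
  have e1 : ∀ p : ℤ, p - 1 - 1 = p - 2 := by intro p; ring
  have e2 : ∀ p : ℤ, p - 1 + 1 = p := by intro p; ring
  have e3 : ∀ p : ℤ, p + 1 - 1 = p := by intro p; ring
  have e4 : ∀ p : ℤ, p + 1 + 1 = p + 2 := by intro p; ring
  constructor
  · rintro ⟨e, ⟨d, hd, rfl⟩, t, p, h1, h2, h3, h4⟩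
    cases t with
    | zero =>
      left
      exact ⟨d 0 (p-1), d 0 p, d 0 (p+1), ⟨d, hd, p, rfl, rfl, rfl⟩,
        h1.symm, h2.symm, h3.symm, h4.symm⟩
    | succ t =>
      right
      refine ⟨((d t (p-2), d t (p-1), d t p, d t (p+1), d t (p+2)),
        (d (t+1) (p-1), d (t+1) p, d (t+1) (p+1))),
        ⟨d, hd, t, p, rfl, rfl, rfl, rfl, rfl, rfl, rfl, rfl⟩, ?_, ?_, ?_, ?_⟩
      · rw [← h1]; show h.s (d t (p-1-1), d t (p-1), d t (p-1+1)) = _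
        rw [e1, e2]
      · exact h2.symm
      · rw [← h3]; show h.s (d t (p+1-1), d t (p+1), d t (p+1+1)) = _
        rw [e3, e4]
      · exact h4.symm
  · rintro (⟨sm, s0, sp, ⟨d, hd, p, hm, h0, hp⟩, hl1, hl2, hl3, hs⟩ |
      ⟨q, ⟨d, hd, t, p, q1, q2, q3, q4, q5, q6, q7, q8⟩, hl1, hl2, hl3, hs⟩)
    · refine ⟨h.map d, ⟨d, hd, rfl⟩, 0, p, ?_, ?_, ?_, ?_⟩
      · show h.z (d 0 (p-1)) = _; rw [hm, hl1]
      · show h.z (d 0 p) = _; rw [h0, hl2]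
      · show h.z (d 0 (p+1)) = _; rw [hp, hl3]
      · show h.s (d 0 (p-1), d 0 p, d 0 (p+1)) = _; rw [hm, h0, hp, hs]
    · refine ⟨h.map d, ⟨d, hd, rfl⟩, t+1, p, ?_, ?_, ?_, ?_⟩
      · show h.s (d t (p-1-1), d t (p-1), d t (p-1+1)) = _
        rw [e1, e2, q1, q2, q3, hl1]
      · show h.s (d t (p-1), d t p, d t (p+1)) = _
        rw [q2, q3, q4, hl2]
      · show h.s (d t (p+1-1), d t (p+1), d t (p+1+1)) = _
        rw [e3, e4, q3, q4, q5, hl3]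
      · show h.s (d (t+1) (p-1), d (t+1) p, d (t+1) (p+1)) = _
        rw [q6, q7, q8, hs]

end FSSP
end

section
/- Let α be a minimal-time FSSP solution, β an FSSP-candidate CA, and h a local simulation from α to β (i.e. a local mapping whose associated family Φ_h is deterministic and equals the family of β). If β is a minimal-time FSSP solution, then h is FSSP-compliant: h_z maps ⋆_α, G_α, Q_α to ⋆_β, G_β, Q_β respectively; h_s(l₋₁,l₀,l₁) = ⋆_β iff l₀ = ⋆_α; h_s(l₋₁,l₀,l₁) = F_β iff δ_α(l₋₁,l₀,l₁) = F_α; and h_s(Q_α,Q_α,Q_α) = h_s(Q_α,Q_α,⋆_α) = Q_β. -/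
namespace FSSP

open Classical

variable {σ τ υ : Type}

/-! A local simulation sends the size-`n` initial configuration of `A` to that of `B` (read off
at `n = 2`), so both diagrams of size `n` are compared cell by cell. The `⋆`-region of a diagram
is the `⋆`-region of its initial configuration, and the firing region is the same in both
solutions; since every transition of `A` occurs in some diagram, this transfers to `h.s`. -/

variable {σ τ : Type}

theorem PreCA.diagO_succ_of_eq_some {A : PreCA σ} {c : ℤ → σ} {t : ℕ} {p : ℤ} {a b d : σ}
    (ha : A.diagO c t (p-1) = some a) (hb : A.diagO c t p = some b)
    (hd : A.diagO c t (p+1) = some d) : A.diagO c (t+1) p = A.delta a b d := by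
  simp [PreCA.diagO, ha, hb, hd]

theorem PreCA.diagO_eq_iff_of_delta_eq_iff {A : PreCA σ} {x : σ}
    (hx : ∀ a b c s, A.delta a b c = some s → (s = x ↔ b = x)) (c : ℤ → σ) :
    ∀ {t : ℕ} {p : ℤ} {s : σ}, A.diagO c t p = some s → (s = x ↔ c p = x)
  | 0, p, s, h => by rw [← Option.some_inj.mp h]
  | t+1, p, s, h => by
    simp only [PreCA.diagO, Option.bind_eq_some_iff] at h
    obtain ⟨a, -, b, hb, d, -, hs⟩ := h
    rw [hx a b d s hs]
    exact PreCA.diagO_eq_iff_of_delta_eq_iff hx c hb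

theorem initConfig_comp (f : σ → τ) (st : FSSPStates σ) (n : ℕ) :
    (fun p => f (initConfig st n p)) = initConfig ⟨f st.star, f st.G, f st.Q, f st.F⟩ n := by
  funext p
  simp only [initConfig, apply_ite f]

theorem initConfig_congr {st st' : FSSPStates σ} (hstar : st.star = st'.star) (hG : st.G = st'.G)
    (hQ : st.Q = st'.Q) (n : ℕ) : initConfig st n = initConfig st' n := by
  unfold initConfig
  rw [hstar, hG, hQ]

theorem initConfig_eq_star_of_not_mem {st : FSSPStates σ} {n : ℕ} (hn : 1 ≤ n) {p : ℤ}
    (hp : ¬(1 ≤ p ∧ p ≤ n)) : initConfig st n p = st.star := by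
  unfold initConfig
  split_ifs <;> first | rfl | omega

theorem IsCandidate.initConfig_mem {A : PreCA σ} {st : FSSPStates σ} (hA : IsCandidate A st)
    {n : ℕ} (hn : 2 ≤ n) : initConfig st n ∈ A.init := by
  rw [hA.1]
  exact ⟨n, hn, rfl⟩

theorem IsCandidate.exists_initConfig_of_occurs {A : PreCA σ} {st : FSSPStates σ}
    (hA : IsCandidate A st) {a b d : σ} (hocc : A.Occurs a b d) :
    ∃ n, 2 ≤ n ∧ ∃ (t : ℕ) (p : ℤ), A.diagO (initConfig st n) t (p-1) = some a ∧
      A.diagO (initConfig st n) t p = some b ∧ A.diagO (initConfig st n) t (p+1) = some d := by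
  obtain ⟨c, hc, hocc⟩ := hocc
  rw [hA.1] at hc
  obtain ⟨n, hn, rfl⟩ := hc
  exact ⟨n, hn, hocc⟩

namespace IsSolution

variable {A : PreCA σ} {st : FSSPStates σ}

theorem star_ne_F (hA : IsSolution A st) : st.star ≠ st.F := by
  intro h
  have hfire := (hA.2.2 2 le_rfl 0 0).1 (by rw [← h]; rfl)
  exact absurd hfire.2.1 (by norm_num)

theorem initConfig_ne_star (hA : IsSolution A st) {n : ℕ} (hn : 2 ≤ n) {p : ℤ} (h1 : 1 ≤ p)
    (h2 : p ≤ n) : initConfig st n p ≠ st.star := by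
  have hfire := (hA.2.2 n hn (2*n - 2) p).2 ⟨le_rfl, h1, h2⟩
  exact fun hp => star_ne_F hA ((PreCA.diagO_eq_iff_of_delta_eq_iff hA.1.2.1 _ hfire).2 hp).symm

theorem initConfig_eq_star_iff (hA : IsSolution A st) {n : ℕ} (hn : 2 ≤ n) (p : ℤ) :
    initConfig st n p = st.star ↔ ¬(1 ≤ p ∧ p ≤ n) :=
  ⟨fun h hp => initConfig_ne_star hA hn hp.1 hp.2 h,
    initConfig_eq_star_of_not_mem (by omega)⟩

end IsSolution

namespace IsLocalSimulation

variable {A : PreCA σ} {B : PreCA τ} {sa : FSSPStates σ} {sb : FSSPStates τ}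
  {h : LocalMapping σ τ}

theorem z_star_G_Q (hA : IsCandidate A sa) (hB : IsCandidate B sb)
    (hsim : IsLocalSimulation A B h) :
    h.z sa.star = sb.star ∧ h.z sa.G = sb.G ∧ h.z sa.Q = sb.Q := by
  have hmem : (fun p => h.z (initConfig sa 2 p)) ∈ B.init := by
    rw [hsim.1]
    exact ⟨_, hA.initConfig_mem le_rfl, rfl⟩
  rw [hB.1] at hmem
  obtain ⟨m, hm, heq⟩ := hmem
  refine ⟨?_, ?_, ?_⟩
  · simpa [initConfig] using congrFun heq 0
  · simpa [initConfig] using congrFun heq 1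
  · have hQ := congrFun heq 2
    simp only [initConfig] at hQ
    rwa [if_neg (by omega), if_neg (by omega), if_pos (by omega), if_neg (by omega),
      if_neg (by omega), if_pos (by omega)] at hQ

theorem z_comp_initConfig (hA : IsCandidate A sa) (hB : IsCandidate B sb)
    (hsim : IsLocalSimulation A B h) (n : ℕ) :
    (fun p => h.z (initConfig sa n p)) = initConfig sb n := by
  obtain ⟨hstar, hG, hQ⟩ := hsim.z_star_G_Q hA hB
  rw [initConfig_comp]
  exact initConfig_congr hstar hG hQ n

theorem diagO_initConfig_succ (hA : IsCandidate A sa) (hB : IsCandidate B sb)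
    (hsim : IsLocalSimulation A B h) {n : ℕ} (hn : 2 ≤ n) {t : ℕ} {p : ℤ} {a b d : σ}
    (ha : A.diagO (initConfig sa n) t (p-1) = some a) (hb : A.diagO (initConfig sa n) t p = some b)
    (hd : A.diagO (initConfig sa n) t (p+1) = some d) :
    B.diagO (initConfig sb n) (t+1) p = some (h.s (a, b, d)) := by
  rw [← hsim.z_comp_initConfig hA hB]
  exact hsim.2 _ (hA.initConfig_mem hn) t p a b d ha hb hd

theorem delta_initConfig (hA : IsCandidate A sa) (hB : IsCandidate B sb)
    (hsim : IsLocalSimulation A B h) {n : ℕ} (hn : 2 ≤ n) (p : ℤ) :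
    B.delta (initConfig sb n (p-1)) (initConfig sb n p) (initConfig sb n (p+1)) =
      some (h.s (initConfig sa n (p-1), initConfig sa n p, initConfig sa n (p+1))) :=
  hsim.diagO_initConfig_succ hA hB hn (t := 0) rfl rfl rfl

end IsLocalSimulation

/-- a local simulation between two minimal-time FSSP solutions
is FSSP-compliant (the domain of `δ_α` consisting of the occurring local
configurations). -/
theorem stmt9 {σ τ : Type} (A : PreCA σ) (B : PreCA τ)
    (sa : FSSPStates σ) (sb : FSSPStates τ)
    (hA : IsSolution A sa) (hB : IsSolution B sb)
    (hmin : ∀ a b c : σ, (A.delta a b c).isSome → A.Occurs a b c)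
    (h : LocalMapping σ τ) (hsim : IsLocalSimulation A B h) :
    FSSPCompliant A sa sb h := by
  obtain ⟨hstar, hG, hQ⟩ := hsim.z_star_G_Q hA.1 hB.1
  -- cells 2, 3, 4 of the size-4 configuration are `Q` and cell 5 is `⋆`
  have hQQQ := hsim.delta_initConfig hA.1 hB.1 (n := 4) (by norm_num) 3
  have hQQstar := hsim.delta_initConfig hA.1 hB.1 (n := 4) (by norm_num) 4
  norm_num [initConfig, hB.1.2.2.1, hB.1.2.2.2] at hQQQ hQQstar
  refine ⟨hstar, hG, hQ, fun a b d hdef => ?_, fun a b d hdef => ?_, hQQQ.symm, hQQstar.symm⟩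
  all_goals
    obtain ⟨n, hn, t, p, ha, hb, hd⟩ := hA.1.exists_initConfig_of_occurs (hmin a b d hdef)
    have hsucc := hsim.diagO_initConfig_succ hA.1 hB.1 hn ha hb hd
  · rw [PreCA.diagO_eq_iff_of_delta_eq_iff hB.1.2.1 _ hsucc,
      PreCA.diagO_eq_iff_of_delta_eq_iff hA.1.2.1 _ hb,
      hB.initConfig_eq_star_iff hn, hA.initConfig_eq_star_iff hn]
  · rw [← PreCA.diagO_succ_of_eq_some ha hb hd, hA.2.2 n hn, ← hB.2.2 n hn, hsucc,
      Option.some_inj]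

end FSSP
end

section
/- Let α be a minimal-time FSSP solution, β an FSSP-candidate CA, and h a local simulation from α to β. If h is FSSP-compliant, then β is a minimal-time FSSP solution: D_β(ĉ_n)(t,p) = F_β if and only if t ≥ 2n−2 and 1 ≤ p ≤ n, for every n ≥ 2. -/
namespace FSSP

open Classical

variable {σ τ υ : Type}

/-- if `h` is an FSSP-compliant local simulation from a
minimal-time FSSP solution `α` to an FSSP-candidate `β`, then `β` is a
minimal-time FSSP solution. -/
theorem stmt10 {σ τ : Type} (A : PreCA σ) (B : PreCA τ)
    (sa : FSSPStates σ) (sb : FSSPStates τ)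
    (hA : IsSolution A sa) (hBc : IsCandidate B sb) (hBT : B.Total)
    (hdist : sb.F ≠ sb.star ∧ sb.F ≠ sb.G ∧ sb.F ≠ sb.Q)
    (h : LocalMapping σ τ) (hsim : IsLocalSimulation A B h)
    (hcomp : FSSPCompliant A sa sb h) :
    IsSolution B sb := by

  refine ⟨hBc, hBT, ?_⟩
  intro n hn t p
  have hmem : initConfig sa n ∈ A.init := by
    rw [hA.1.1]; exact ⟨n, hn, rfl⟩
  have hzinit : (fun q => h.z (initConfig sa n q)) = initConfig sb n := by
    funext q
    unfold initConfig
    split_ifs <;> simp [hcomp.1, hcomp.2.1, hcomp.2.2.1]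
  cases t with
  | zero =>
    simp only [PreCA.diagO, Option.some_inj]
    constructor
    · intro hf
      exfalso
      unfold initConfig at hf
      split_ifs at hf
      · exact hdist.1 hf.symm
      · exact hdist.2.1 hf.symm
      · exact hdist.2.2 hf.symm
      · exact hdist.1 hf.symm
    · rintro ⟨h1, -⟩
      omega
  | succ t =>
    obtain ⟨a, ha⟩ := Option.isSome_iff_exists.mp (hA.2.1 _ hmem t (p-1))
    obtain ⟨b, hb⟩ := Option.isSome_iff_exists.mp (hA.2.1 _ hmem t p)
    obtain ⟨d, hd⟩ := Option.isSome_iff_exists.mp (hA.2.1 _ hmem t (p+1))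
    have hB := hsim.2 _ hmem t p a b d ha hb hd
    rw [hzinit] at hB
    have hATP : A.diagO (initConfig sa n) (t+1) p = A.delta a b d := by
      simp [PreCA.diagO, ha, hb, hd]
    have hds : (A.delta a b d).isSome := by
      rw [← hATP]; exact hA.2.1 _ hmem (t+1) p
    have hF := hcomp.2.2.2.2.1 a b d hds
    rw [hB, Option.some_inj, hF, ← hATP]
    exact hA.2.2 n hn (t+1) p


end FSSP
end
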